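/- arXiv:2509.20620 — 7 statements merged into one kernel-verified Lean document; each statement's English description precedes it below -/
import Mathlib

section
/- Let J be an invertible n×n complex matrix and let 𝔤 = {W ∈ Mₙ(ℂ) : WᴴJ + JW = 0}. If J² commutes with every element of 𝔤 (i.e. J²W = WJ² for all W ∈ 𝔤), then 𝔤 is closed under conjugate transpose: 𝔤 = 𝔤ᴴ. -/
open Matrix

/-- If `J` is invertible and `J²` commutes with every element of
`𝔤 = {W : WᴴJ + JW = 0}`, then 𝔤 is closed under conjugate transpose: `𝔤 = 𝔤ᴴ`. -/
theorem stmt_1 (n : ℕ) (J : Matrix (Fin n) (Fin n) ℂ) (hJ : IsUnit J)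
    (hcomm : ∀ W : Matrix (Fin n) (Fin n) ℂ, Wᴴ * J + J * W = 0 → J ^ 2 * W = W * J ^ 2) :
    {W : Matrix (Fin n) (Fin n) ℂ | Wᴴ * J + J * W = 0} =
      (fun W : Matrix (Fin n) (Fin n) ℂ => Wᴴ) ''
        {W : Matrix (Fin n) (Fin n) ℂ | Wᴴ * J + J * W = 0} := by
  obtain ⟨inst⟩ := hJ.nonempty_invertible
  have key : ∀ W : Matrix (Fin n) (Fin n) ℂ, Wᴴ * J + J * W = 0 →
      (Wᴴ)ᴴ * J + J * Wᴴ = 0 := by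
    intro W hW
    have hc := hcomm W hW
    have h1 : Wᴴ * J = -(J * W) := eq_neg_of_add_eq_zero_left hW
    have h2 : ((Wᴴ)ᴴ * J + J * Wᴴ) * J = 0 := by
      rw [conjTranspose_conjTranspose, add_mul, mul_assoc W, ← sq, mul_assoc, h1,
        mul_neg, ← mul_assoc, ← sq, hc]
      exact add_neg_cancel _
    have := congrArg (· * ⅟J) h2
    simpa [mul_assoc] using this
  ext W
  constructor
  · intro hW
    exact ⟨Wᴴ, key W hW, by simp⟩
  · rintro ⟨V, hV, rfl⟩
    exact key V hV
end

section
/- Let J be an invertible n×n complex matrix with J² = αI for some nonzero complex scalar α. Let W₀ be an n×n complex matrix with W₀ᴴJ + JW₀ = 0 and let Q be an n×n complex matrix with QᴴJQ = J. Then W₁ := Qᴴ W₀ J Q J⁻¹ again satisfies W₁ᴴJ + JW₁ = 0; that is, the update W₀ ↦ Qᴴ W₀ J Q J⁻¹ preserves the J-quadratic Lie algebra. -/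
open Matrix

/-
The defining relation `QᴴJQ = J` gives `JQJ⁻¹ = (Qᴴ)⁻¹`, so `W₁ = Qᴴ W₀ (Qᴴ)⁻¹` is a conjugate of `W₀`.
Because `J² = αI` makes `J⁻¹` a multiple of `J`, inverting `QᴴJQ = J` shows that `Qᴴ` lies in the
group as well, and the Lie algebra is stable under conjugation by group elements.
-/

namespace Matrix

variable {n R : Type*} [Fintype n] [DecidableEq n] [CommRing R] {J P W : Matrix n n R}

theorem eq_smul_inv_of_mul_self_eq_smul {α : R} (hJ : IsUnit J) (hJ2 : J * J = α • 1) :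
    J = α • J⁻¹ := by
  rw [← one_mul J⁻¹, ← smul_mul_assoc, ← hJ2, mul_assoc,
    mul_nonsing_inv J ((isUnit_iff_isUnit_det J).mp hJ), mul_one]

variable [StarRing R]

theorem nonsing_inv_mul_conjTranspose_mul_mul_eq_one (hJ : IsUnit J) (hP : Pᴴ * J * P = J) :
    J⁻¹ * Pᴴ * J * P = 1 := by
  rw [mul_assoc, mul_assoc, ← mul_assoc Pᴴ, hP, nonsing_inv_mul J ((isUnit_iff_isUnit_det J).mp hJ)]

theorem inv_eq_of_conjTranspose_mul_mul_eq (hJ : IsUnit J) (hP : Pᴴ * J * P = J) :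
    P⁻¹ = J⁻¹ * Pᴴ * J :=
  inv_eq_left_inv (nonsing_inv_mul_conjTranspose_mul_mul_eq_one hJ hP)

theorem isUnit_det_of_conjTranspose_mul_mul_eq (hJ : IsUnit J) (hP : Pᴴ * J * P = J) :
    IsUnit P.det :=
  isUnit_det_of_left_inverse (nonsing_inv_mul_conjTranspose_mul_mul_eq_one hJ hP)

theorem mul_mul_inv_eq_conjTranspose_inv (hJ : IsUnit J) (hP : Pᴴ * J * P = J) :
    J * P * J⁻¹ = (Pᴴ)⁻¹ :=
  (inv_eq_right_inv <| by
    rw [← mul_assoc, ← mul_assoc, hP, mul_nonsing_inv J ((isUnit_iff_isUnit_det J).mp hJ)]).symm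

theorem mul_mul_conjTranspose_eq_of_mul_self_eq_smul {α : R} (hJ : IsUnit J)
    (hJ2 : J * J = α • 1) (hP : Pᴴ * J * P = J) : P * J * Pᴴ = J := by
  have hPJP : P * J⁻¹ * Pᴴ = J⁻¹ := by
    refine (inv_eq_left_inv ?_).symm
    rw [show P * J⁻¹ * Pᴴ * J = P * (J⁻¹ * Pᴴ * J) by simp only [mul_assoc],
      ← inv_eq_of_conjTranspose_mul_mul_eq hJ hP,
      mul_nonsing_inv P (isUnit_det_of_conjTranspose_mul_mul_eq hJ hP)]
  rw [eq_smul_inv_of_mul_self_eq_smul hJ hJ2, Matrix.mul_smul, smul_mul_assoc, hPJP]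

theorem conjTranspose_mul_add_mul_conj_eq_zero (hJ : IsUnit J) (hP : Pᴴ * J * P = J)
    (hW : Wᴴ * J + J * W = 0) :
    (P * W * P⁻¹)ᴴ * J + J * (P * W * P⁻¹) = 0 := by
  have hPdet := isUnit_det_of_conjTranspose_mul_mul_eq hJ hP
  have hPJ : Pᴴ * J = J * P⁻¹ := by
    rw [← hP, mul_assoc _ P, mul_nonsing_inv P hPdet, mul_one, hP]
  have hPinvJ : (P⁻¹)ᴴ * J = J * P := by
    rw [← hP, ← mul_assoc, ← mul_assoc, ← conjTranspose_mul, mul_nonsing_inv P hPdet,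
      conjTranspose_one, one_mul, hP]
  have hWJ : Wᴴ * J = -(J * W) := eq_neg_of_add_eq_zero_left hW
  calc (P * W * P⁻¹)ᴴ * J + J * (P * W * P⁻¹)
      = (P⁻¹)ᴴ * (Wᴴ * (Pᴴ * J)) + J * (P * W * P⁻¹) := by
        simp only [conjTranspose_mul, mul_assoc]
    _ = -((P⁻¹)ᴴ * J * (W * P⁻¹)) + J * (P * W * P⁻¹) := by
        rw [hPJ, ← mul_assoc Wᴴ, hWJ]; simp only [neg_mul, mul_neg, mul_assoc]
    _ = 0 := by rw [hPinvJ]; simp only [mul_assoc, neg_add_cancel]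

end Matrix

theorem stmt_4_general (n : ℕ) (J W₀ Q : Matrix (Fin n) (Fin n) ℂ) (α : ℂ)
    (hJ : IsUnit J) (hJ2 : J ^ 2 = α • (1 : Matrix (Fin n) (Fin n) ℂ))
    (hW₀ : W₀ᴴ * J + J * W₀ = 0) (hQ : Qᴴ * J * Q = J) :
    (Qᴴ * W₀ * J * Q * J⁻¹)ᴴ * J + J * (Qᴴ * W₀ * J * Q * J⁻¹) = 0 := by
  have hW₁ : Qᴴ * W₀ * J * Q * J⁻¹ = Qᴴ * W₀ * (Qᴴ)⁻¹ := by
    rw [← mul_mul_inv_eq_conjTranspose_inv hJ hQ]; simp only [mul_assoc]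
  have hQH : (Qᴴ)ᴴ * J * Qᴴ = J := by
    rw [conjTranspose_conjTranspose]
    exact mul_mul_conjTranspose_eq_of_mul_self_eq_smul hJ (sq J ▸ hJ2) hQ
  rw [hW₁]
  exact conjTranspose_mul_add_mul_conj_eq_zero hJ hQH hW₀

/-- If `J` is invertible with `J² = αI`, `α ≠ 0`, `W₀ᴴJ + JW₀ = 0` and `QᴴJQ = J`,
then `W₁ = Qᴴ W₀ J Q J⁻¹` again satisfies `W₁ᴴJ + JW₁ = 0`. -/
theorem stmt_4 (n : ℕ) (J W₀ Q : Matrix (Fin n) (Fin n) ℂ) (α : ℂ) (hα : α ≠ 0)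
    (hJ : IsUnit J) (hJ2 : J ^ 2 = α • (1 : Matrix (Fin n) (Fin n) ℂ))
    (hW₀ : W₀ᴴ * J + J * W₀ = 0) (hQ : Qᴴ * J * Q = J) :
    (Qᴴ * W₀ * J * Q * J⁻¹)ᴴ * J + J * (Qᴴ * W₀ * J * Q * J⁻¹) = 0 :=
  stmt_4_general n J W₀ Q α hJ hJ2 hW₀ hQ
end

section
/- Let B : Mₙ(ℂ) → Mₙ(ℂ) be any map and let Q, P : ℝ → Mₙ(ℂ) be differentiable curves satisfying, for all t, Q'(t) = Q(t)·B(Q(t)ᴴP(t))ᴴ and P'(t) = −P(t)·B(Q(t)ᴴP(t)). Then the curve W(t) := Q(t)ᴴP(t) satisfies the isospectral equation W'(t) = [B(W(t)), W(t)] = B(W(t))W(t) − W(t)B(W(t)) for all t. -/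
open Matrix

attribute [local instance] Matrix.frobeniusNormedAddCommGroup Matrix.frobeniusNormedSpace
attribute [local instance] Matrix.frobeniusNormedRing Matrix.frobeniusNormedAlgebra

theorem HasDerivAt.star_mul_of_lift {A : Type*} [NormedRing A] [NormedAlgebra ℝ A] [StarRing A]
    [StarModule ℝ A] [ContinuousStar A] {q p : ℝ → A} {b : A} {t : ℝ}
    (hq : HasDerivAt q (q t * star b) t) (hp : HasDerivAt p (-(p t * b)) t) :
    HasDerivAt (fun s => star (q s) * p s) (b * (star (q t) * p t) - star (q t) * p t * b) t := by
  refine (hq.star.mul hp).congr_deriv ?_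
  simp only [star_mul, star_star, mul_assoc, mul_neg, sub_eq_add_neg]

/-- If `Q' = Q·B(QᴴP)ᴴ` and `P' = −P·B(QᴴP)`, then `W = QᴴP` satisfies the
isospectral equation `W' = B(W)W − WB(W)`. -/
theorem stmt_5 (n : ℕ) (B : Matrix (Fin n) (Fin n) ℂ → Matrix (Fin n) (Fin n) ℂ)
    (Q P : ℝ → Matrix (Fin n) (Fin n) ℂ)
    (hQ : ∀ t : ℝ, HasDerivAt Q (Q t * (B ((Q t)ᴴ * P t))ᴴ) t)
    (hP : ∀ t : ℝ, HasDerivAt P (-(P t * B ((Q t)ᴴ * P t))) t) :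
    ∀ t : ℝ, HasDerivAt (fun t => (Q t)ᴴ * P t)
      (B ((Q t)ᴴ * P t) * ((Q t)ᴴ * P t) - ((Q t)ᴴ * P t) * B ((Q t)ᴴ * P t)) t :=
  fun t => (hQ t).star_mul_of_lift (hP t)
end

section
/- Let J be an invertible n×n complex matrix with J² = αI, α ≠ 0, let W₀ ∈ Mₙ(ℂ), and let B : Mₙ(ℂ) → Mₙ(ℂ) satisfy B(W)ᴴJ + JB(W) = 0 for all W. Suppose Q : ℝ → Mₙ(ℂ) is differentiable and satisfies Q'(t) = Q(t)·B(Q(t)ᴴ W₀ J Q(t) J⁻¹)ᴴ for all t. Then P(t) := W₀ J Q(t) J⁻¹ is differentiable and satisfies P'(t) = −P(t)·B(Q(t)ᴴP(t)); that is, (Q,P) solves the lifted system Q' = Q·B(QᴴP)ᴴ, P' = −P·B(QᴴP). -/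
open Matrix

attribute [local instance] Matrix.frobeniusNormedAddCommGroup Matrix.frobeniusNormedSpace

/-- If `J² = αI` with `α ≠ 0`, `B` takes values in the `J`-quadratic Lie algebra, and
`Q' = Q·B(Qᴴ W₀ J Q J⁻¹)ᴴ`, then `P := W₀ J Q J⁻¹` satisfies `P' = −P·B(QᴴP)`;
i.e. `(Q, P)` solves the lifted system. -/
theorem stmt_7 (n : ℕ) (J W₀ : Matrix (Fin n) (Fin n) ℂ) (α : ℂ) (hα : α ≠ 0)
    (hJ : IsUnit J) (hJ2 : J ^ 2 = α • (1 : Matrix (Fin n) (Fin n) ℂ))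
    (B : Matrix (Fin n) (Fin n) ℂ → Matrix (Fin n) (Fin n) ℂ)
    (hB : ∀ W : Matrix (Fin n) (Fin n) ℂ, (B W)ᴴ * J + J * B W = 0)
    (Q : ℝ → Matrix (Fin n) (Fin n) ℂ)
    (hQ : ∀ t : ℝ, HasDerivAt Q (Q t * (B ((Q t)ᴴ * W₀ * J * Q t * J⁻¹))ᴴ) t) :
    ∀ t : ℝ, HasDerivAt (fun t => W₀ * J * Q t * J⁻¹)
      (-((W₀ * J * Q t * J⁻¹) * B ((Q t)ᴴ * (W₀ * J * Q t * J⁻¹)))) t := by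
  intro t
  have hJ2' : J * J = α • 1 := by rw [← pow_two]; exact hJ2
  have hJJ : J * (α⁻¹ • J) = 1 := by
    rw [Matrix.mul_smul, hJ2', smul_smul, inv_mul_cancel₀ hα, one_smul]
  have hJi : J⁻¹ = α⁻¹ • J := Matrix.inv_eq_right_inv hJJ
  set b := B ((Q t)ᴴ * W₀ * J * Q t * J⁻¹) with hb
  have hbH : bᴴ * J = -(J * b) := by
    have h := hB ((Q t)ᴴ * W₀ * J * Q t * J⁻¹)
    rw [← hb] at h
    linear_combination (norm := noncomm_ring) h
  have hbH' : bᴴ = -(α⁻¹ • (J * b * J)) := by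
    calc bᴴ = bᴴ * (J * (α⁻¹ • J)) := by rw [hJJ, mul_one]
    _ = (bᴴ * J) * (α⁻¹ • J) := by rw [mul_assoc]
    _ = -(J * b) * (α⁻¹ • J) := by rw [hbH]
    _ = -(α⁻¹ • (J * b * J)) := by
        simp [Matrix.mul_smul, mul_assoc]
  let L : Matrix (Fin n) (Fin n) ℂ →ₗ[ℂ] Matrix (Fin n) (Fin n) ℂ :=
    { toFun := fun X => W₀ * J * X * J⁻¹
      map_add' := fun X Y => by simp [Matrix.mul_add, Matrix.add_mul]
      map_smul' := fun c X => by simp [Matrix.mul_smul, Matrix.smul_mul] }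
  have hd : HasDerivAt (fun t => W₀ * J * Q t * J⁻¹)
      (W₀ * J * (Q t * bᴴ) * J⁻¹) t :=
    by exact ((LinearMap.toContinuousLinearMap L).restrictScalars ℝ).hasFDerivAt.comp_hasDerivAt t (hQ t)

  convert hd using 1
  have harg : (Q t)ᴴ * (W₀ * J * Q t * J⁻¹) = (Q t)ᴴ * W₀ * J * Q t * J⁻¹ := by
    noncomm_ring
  rw [harg, ← hb, hJi, hbH']
  simp only [mul_neg, neg_mul, neg_inj, Matrix.mul_smul, Matrix.smul_mul, smul_smul, mul_assoc,
    hJ2', Matrix.smul_mul, Matrix.mul_smul, mul_one, Matrix.mul_one, one_mul, smul_smul]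
  rw [show α⁻¹ * (α⁻¹ * α) = α⁻¹ by field_simp]
end

section
/- Let J be an invertible n×n complex matrix with J² = αI, α ≠ 0, let W₀ ∈ Mₙ(ℂ), and let B : Mₙ(ℂ) → Mₙ(ℂ) satisfy B(W)ᴴJ + JB(W) = 0 for all W. Suppose Q : ℝ → Mₙ(ℂ) is differentiable and satisfies Q'(t) = Q(t)·B(Q(t)ᴴ W₀ J Q(t) J⁻¹)ᴴ for all t. Then the curve W(t) := Q(t)ᴴ W₀ J Q(t) J⁻¹ satisfies the isospectral equation W'(t) = [B(W(t)), W(t)]. -/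
open Matrix

attribute [local instance] Matrix.frobeniusNormedAddCommGroup Matrix.frobeniusNormedSpace
  Matrix.frobeniusNormedRing Matrix.frobeniusNormedAlgebra

/-!
Write `W = Qᴴ W₀ J Q J⁻¹`. Differentiating, `Q' = Q B(W)ᴴ` gives `(Qᴴ)' = B(W) Qᴴ`, so
`W' = B(W) W + Qᴴ W₀ J Q · B(W)ᴴ J⁻¹`. Since `J⁻¹ = α⁻¹ J` is a multiple of `J`, the relation
`B(W)ᴴ J = -J B(W)` also holds with `J⁻¹` in place of `J`, which turns the second term into
`-W B(W)`.
-/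

section Algebra

variable {ι K : Type*} [Fintype ι] [DecidableEq ι] [Field K]

theorem Matrix.inv_eq_smul_of_sq_eq_smul_one {J : Matrix ι ι K} {α : K} (hα : α ≠ 0)
    (hJ2 : J ^ 2 = α • (1 : Matrix ι ι K)) : J⁻¹ = α⁻¹ • J :=
  inv_eq_right_inv <| by rw [Matrix.mul_smul, ← sq, hJ2, smul_smul, inv_mul_cancel₀ hα, one_smul]

theorem Matrix.mul_inv_eq_neg_inv_mul_of_sq_eq_smul_one {J X B : Matrix ι ι K} {α : K}
    (hα : α ≠ 0) (hJ2 : J ^ 2 = α • (1 : Matrix ι ι K)) (hXB : X * J + J * B = 0) :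
    X * J⁻¹ = -(J⁻¹ * B) := by
  rw [inv_eq_smul_of_sq_eq_smul_one hα hJ2, Matrix.mul_smul, Matrix.smul_mul,
    eq_neg_of_add_eq_zero_left hXB, smul_neg]

end Algebra

theorem hasDerivAt_conjTranspose_mul_mul_mul_lie {𝕜 ι : Type*} [RCLike 𝕜] [Fintype ι]
    [DecidableEq ι] {Q : ℝ → Matrix ι ι 𝕜} {t : ℝ} {A B K : Matrix ι ι 𝕜}
    (hQ : HasDerivAt Q (Q t * Bᴴ) t) (hBK : Bᴴ * K = -(K * B)) :
    HasDerivAt (fun s => (Q s)ᴴ * A * Q s * K)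
      (B * ((Q t)ᴴ * A * Q t * K) - (Q t)ᴴ * A * Q t * K * B) t := by
  have hQH := hQ.star
  simp only [star_eq_conjTranspose, conjTranspose_mul, conjTranspose_conjTranspose] at hQH
  refine (((hQH.mul_const A).mul hQ).mul_const K).congr_deriv ?_
  simp only [add_mul, Matrix.mul_assoc, hBK, Matrix.mul_neg, sub_eq_add_neg]

theorem stmt_8_general (n : ℕ) (J W₀ : Matrix (Fin n) (Fin n) ℂ) (α : ℂ) (hα : α ≠ 0)
    (hJ2 : J ^ 2 = α • (1 : Matrix (Fin n) (Fin n) ℂ))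
    (B : Matrix (Fin n) (Fin n) ℂ → Matrix (Fin n) (Fin n) ℂ)
    (hB : ∀ W : Matrix (Fin n) (Fin n) ℂ, (B W)ᴴ * J + J * B W = 0)
    (Q : ℝ → Matrix (Fin n) (Fin n) ℂ)
    (hQ : ∀ t : ℝ, HasDerivAt Q (Q t * (B ((Q t)ᴴ * W₀ * J * Q t * J⁻¹))ᴴ) t) :
    ∀ t : ℝ, HasDerivAt (fun t => (Q t)ᴴ * W₀ * J * Q t * J⁻¹)
      (B ((Q t)ᴴ * W₀ * J * Q t * J⁻¹) * ((Q t)ᴴ * W₀ * J * Q t * J⁻¹) -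
        ((Q t)ᴴ * W₀ * J * Q t * J⁻¹) * B ((Q t)ᴴ * W₀ * J * Q t * J⁻¹)) t := by
  intro t
  simpa only [Matrix.mul_assoc _ W₀ J] using hasDerivAt_conjTranspose_mul_mul_mul_lie
    (A := W₀ * J) (hQ t) (mul_inv_eq_neg_inv_mul_of_sq_eq_smul_one hα hJ2 (hB _))

/-- If `J² = αI` with `α ≠ 0`, `B` takes values in the `J`-quadratic Lie algebra, and
`Q' = Q·B(Qᴴ W₀ J Q J⁻¹)ᴴ`, then `W := Qᴴ W₀ J Q J⁻¹` satisfies the isospectral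
equation `W' = [B(W), W]`. -/
theorem stmt_8 (n : ℕ) (J W₀ : Matrix (Fin n) (Fin n) ℂ) (α : ℂ) (hα : α ≠ 0)
    (hJ : IsUnit J) (hJ2 : J ^ 2 = α • (1 : Matrix (Fin n) (Fin n) ℂ))
    (B : Matrix (Fin n) (Fin n) ℂ → Matrix (Fin n) (Fin n) ℂ)
    (hB : ∀ W : Matrix (Fin n) (Fin n) ℂ, (B W)ᴴ * J + J * B W = 0)
    (Q : ℝ → Matrix (Fin n) (Fin n) ℂ)
    (hQ : ∀ t : ℝ, HasDerivAt Q (Q t * (B ((Q t)ᴴ * W₀ * J * Q t * J⁻¹))ᴴ) t) :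
    ∀ t : ℝ, HasDerivAt (fun t => (Q t)ᴴ * W₀ * J * Q t * J⁻¹)
      (B ((Q t)ᴴ * W₀ * J * Q t * J⁻¹) * ((Q t)ᴴ * W₀ * J * Q t * J⁻¹) -
        ((Q t)ᴴ * W₀ * J * Q t * J⁻¹) * B ((Q t)ᴴ * W₀ * J * Q t * J⁻¹)) t :=
  stmt_8_general n J W₀ α hα hJ2 B hB Q hQ
end

section
/- Fix n, s ∈ ℕ, an invertible n×n complex matrix J with J² = αI for some α ≠ 0, matrices Q₀, W₀ ∈ Mₙ(ℂ), a map B : Mₙ(ℂ) → Mₙ(ℂ) satisfying B(W)ᴴJ + JB(W) = 0 for all W, real Runge–Kutta coefficients a : Fin s × Fin s → ℝ, and a step size h ∈ ℝ. Set P₀ := W₀ J Q₀ J⁻¹. For stages K^Q : Fin s → Mₙ(ℂ), define K^P_i := W₀ J K^Q_i J⁻¹ for each i. Then the pair (K^Q, K^P) satisfies the full stage equations K^Q_i = Q₀ + h·Σ_j a_{ij} K^Q_j · B((K^Q_j)ᴴ K^P_j)ᴴ and K^P_i = P₀ − h·Σ_j a_{ij} K^P_j · B((K^Q_j)ᴴ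 K^P_j) for all i, if and only if K^Q satisfies the reduced stage equations K^Q_i = Q₀ + h·Σ_j a_{ij} K^Q_j · B((K^Q_j)ᴴ W₀ J K^Q_j J⁻¹)ᴴ for all i. -/
open Matrix

/-- Equivalence between the Runge–Kutta stage equations for the lifted system on `(Q,P)`
and the reduced stage equations on the group variable `Q` alone, under the
substitution `K^P_i = W₀ J K^Q_i J⁻¹`. -/
theorem stmt_9 (n s : ℕ) (J Q₀ W₀ : Matrix (Fin n) (Fin n) ℂ) (α : ℂ) (hα : α ≠ 0)
    (hJ : IsUnit J) (hJ2 : J ^ 2 = α • (1 : Matrix (Fin n) (Fin n) ℂ))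
    (B : Matrix (Fin n) (Fin n) ℂ → Matrix (Fin n) (Fin n) ℂ)
    (hB : ∀ W : Matrix (Fin n) (Fin n) ℂ, (B W)ᴴ * J + J * B W = 0)
    (a : Fin s → Fin s → ℝ) (h : ℝ)
    (KQ : Fin s → Matrix (Fin n) (Fin n) ℂ) :
    ((∀ i : Fin s,
        KQ i = Q₀ + (h : ℂ) • ∑ j : Fin s, (a i j : ℂ) •
          (KQ j * (B ((KQ j)ᴴ * (W₀ * J * KQ j * J⁻¹)))ᴴ)) ∧
     (∀ i : Fin s,
        W₀ * J * KQ i * J⁻¹ = W₀ * J * Q₀ * J⁻¹ - (h : ℂ) • ∑ j : Fin s, (a i j : ℂ) •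
          ((W₀ * J * KQ j * J⁻¹) * B ((KQ j)ᴴ * (W₀ * J * KQ j * J⁻¹))))) ↔
    (∀ i : Fin s,
        KQ i = Q₀ + (h : ℂ) • ∑ j : Fin s, (a i j : ℂ) •
          (KQ j * (B ((KQ j)ᴴ * W₀ * J * KQ j * J⁻¹))ᴴ)) := by
  -- the two forms of the argument of B agree up to associativity
  have harg : ∀ j : Fin s,
      (KQ j)ᴴ * W₀ * J * KQ j * J⁻¹ = (KQ j)ᴴ * (W₀ * J * KQ j * J⁻¹) := by
    intro j; noncomm_ring
  -- J⁻¹ = α⁻¹ • J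
  have hJinv : J⁻¹ = α⁻¹ • J := by
    apply inv_eq_right_inv
    rw [Matrix.mul_smul, ← pow_two, hJ2, smul_smul, inv_mul_cancel₀ hα, one_smul]
  -- key identity: (B W)ᴴ * J⁻¹ = -(J⁻¹ * B W)
  have hkey : ∀ W : Matrix (Fin n) (Fin n) ℂ, (B W)ᴴ * J⁻¹ = -(J⁻¹ * B W) := by
    intro W
    have h1 : (B W)ᴴ * J = -(J * B W) :=
      eq_neg_of_add_eq_zero_left (hB W)
    rw [hJinv, Matrix.mul_smul, h1, Matrix.smul_mul, smul_neg]
  -- P-equation follows from the Q-equation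
  have hP : (∀ i : Fin s,
      KQ i = Q₀ + (h : ℂ) • ∑ j : Fin s, (a i j : ℂ) •
        (KQ j * (B ((KQ j)ᴴ * (W₀ * J * KQ j * J⁻¹)))ᴴ)) →
      (∀ i : Fin s,
      W₀ * J * KQ i * J⁻¹ = W₀ * J * Q₀ * J⁻¹ - (h : ℂ) • ∑ j : Fin s, (a i j : ℂ) •
        ((W₀ * J * KQ j * J⁻¹) * B ((KQ j)ᴴ * (W₀ * J * KQ j * J⁻¹)))) := by
    intro hQ i
    set W : Fin s → Matrix (Fin n) (Fin n) ℂ :=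
      fun j => (KQ j)ᴴ * (W₀ * J * KQ j * J⁻¹) with hW
    have := hQ i
    calc W₀ * J * KQ i * J⁻¹
        = W₀ * J * (Q₀ + (h : ℂ) • ∑ j : Fin s, (a i j : ℂ) •
            (KQ j * (B (W j))ᴴ)) * J⁻¹ := by rw [← this]
      _ = W₀ * J * Q₀ * J⁻¹ + (h : ℂ) • ∑ j : Fin s, (a i j : ℂ) •
            (W₀ * J * (KQ j * ((B (W j))ᴴ * J⁻¹))) := by
          rw [Matrix.mul_add, Matrix.add_mul, Matrix.mul_smul, Matrix.smul_mul,
            Finset.mul_sum, Finset.sum_mul]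
          congr 2
          apply Finset.sum_congr rfl
          intro j _
          rw [Matrix.mul_smul, Matrix.smul_mul]
          congr 1
          noncomm_ring
      _ = W₀ * J * Q₀ * J⁻¹ - (h : ℂ) • ∑ j : Fin s, (a i j : ℂ) •
            ((W₀ * J * KQ j * J⁻¹) * B (W j)) := by
          rw [sub_eq_add_neg, ← smul_neg, ← Finset.sum_neg_distrib]
          congr 2
          apply Finset.sum_congr rfl
          intro j _
          rw [← smul_neg]
          congr 1
          rw [hkey (W j)]
          noncomm_ring
  constructor
  · rintro ⟨hQ, -⟩ i
    simpa [harg] using hQ i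
  · intro hQ
    have hQ' : ∀ i : Fin s,
        KQ i = Q₀ + (h : ℂ) • ∑ j : Fin s, (a i j : ℂ) •
          (KQ j * (B ((KQ j)ᴴ * (W₀ * J * KQ j * J⁻¹)))ᴴ) := by
      intro i; simpa [harg] using hQ i
    exact ⟨hQ', hP hQ'⟩
end

section
/- Let H : Mₙ(ℂ) → ℝ be differentiable (as a function on Mₙ(ℂ) regarded as a real vector space with the Frobenius inner product ⟨A,B⟩ = Re trace(AᴴB)), and let G : Mₙ(ℂ) → Mₙ(ℂ) be its gradient, i.e. the derivative of H at W in direction X equals Re trace(G(W)ᴴ X) for all W, X ∈ Mₙ(ℂ). If W : ℝ → Mₙ(ℂ) is a differentiable curve satisfying W'(t) = [G(W(t))ᴴ, W(t)] for all t, then t ↦ H(W(t)) is constant; that is, the Hamiltonian is an invariant of the isospectral flow with B(W) = G(W)ᴴ. -/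
open Matrix

attribute [local instance] Matrix.frobeniusNormedAddCommGroup Matrix.frobeniusNormedSpace

/-
Along the flow, the chain rule gives `d/dt H(W) = Re trace(G(W)ᴴ [G(W)ᴴ, W])`, and
`trace(A [A, W]) = trace(A A W) - trace(A W A)` vanishes by cyclicity of the trace.
-/

theorem Matrix.trace_mul_sub_mul_comm {ι R : Type*} [Fintype ι] [CommRing R]
    (A B : Matrix ι ι R) : (A * (A * B - B * A)).trace = 0 := by
  rw [Matrix.mul_sub, trace_sub, ← Matrix.mul_assoc, ← Matrix.mul_assoc,
    trace_mul_comm (A * B) A, Matrix.mul_assoc, sub_self]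

theorem comp_eq_of_fderiv_apply_deriv_eq_zero {E F : Type*}
    [NormedAddCommGroup E] [NormedSpace ℝ E] [NormedAddCommGroup F] [NormedSpace ℝ F]
    {H : E → F} {f : E → E →L[ℝ] F} (hH : ∀ x, HasFDerivAt H (f x) x)
    {W W' : ℝ → E} (hW : ∀ t, HasDerivAt W (W' t) t) (horth : ∀ t, f (W t) (W' t) = 0)
    (s t : ℝ) : H (W s) = H (W t) := by
  have hderiv : ∀ t, HasDerivAt (H ∘ W) 0 t := fun t =>
    ((hH (W t)).comp_hasDerivAt t (hW t)).congr_deriv (horth t)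
  exact is_const_of_deriv_eq_zero (fun t => (hderiv t).differentiableAt)
    (fun t => (hderiv t).deriv) s t

/-- If `H : Mₙ(ℂ) → ℝ` is differentiable with gradient `G` with respect to the real
Frobenius inner product `⟨A, X⟩ = Re trace(AᴴX)`, then `H` is constant along any
solution of the isospectral flow `W' = [G(W)ᴴ, W]`. -/
theorem stmt_12 (n : ℕ) (H : Matrix (Fin n) (Fin n) ℂ → ℝ)
    (G : Matrix (Fin n) (Fin n) ℂ → Matrix (Fin n) (Fin n) ℂ)
    (f : Matrix (Fin n) (Fin n) ℂ → (Matrix (Fin n) (Fin n) ℂ →L[ℝ] ℝ))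
    (hH : ∀ A : Matrix (Fin n) (Fin n) ℂ, HasFDerivAt H (f A) A)
    (hf : ∀ A X : Matrix (Fin n) (Fin n) ℂ, f A X = (((G A)ᴴ * X).trace).re)
    (W : ℝ → Matrix (Fin n) (Fin n) ℂ)
    (hW : ∀ t : ℝ, HasDerivAt W ((G (W t))ᴴ * W t - W t * (G (W t))ᴴ) t) :
    ∀ t : ℝ, H (W t) = H (W 0) := by
  refine fun t => comp_eq_of_fderiv_apply_deriv_eq_zero hH hW (fun s => ?_) t 0
  exact (hf _ _).trans (by rw [trace_mul_sub_mul_comm, Complex.zero_re])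
end
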